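/- arXiv:1411.0828 — 5 statements merged into one kernel-verified Lean document; each statement's English description precedes it below -/
import Mathlib

section
/- A POVM A is pure state informationally complete (distinguishes all pairs of pure states) if and only if the orthogonal complement R(A)^⊥ contains no selfadjoint operator of rank 2. -/
open Matrix Kronecker
open scoped ComplexOrder

noncomputable section

def IsPOVM {n : Type*} [Fintype n] [DecidableEq n] {m : ℕ}
    (A : Fin m → Matrix n n ℂ) : Prop :=
  (∀ x, (A x).PosSemidef) ∧ ∑ x, A x = 1

def IsState {n : Type*} [Fintype n] [DecidableEq n] (ρ : Matrix n n ℂ) : Prop :=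
  ρ.PosSemidef ∧ ρ.trace = 1

def IsPureState {n : Type*} [Fintype n] [DecidableEq n] (ρ : Matrix n n ℂ) : Prop :=
  ρ.IsHermitian ∧ ρ * ρ = ρ ∧ ρ.rank = 1

def Rspan {n : Type*} [Fintype n] [DecidableEq n] {ι : Type*}
    (A : ι → Matrix n n ℂ) : Submodule ℝ (Matrix n n ℂ) :=
  Submodule.span ℝ (Set.range A)

def RPerp {n : Type*} [Fintype n] [DecidableEq n] {m : ℕ}
    (A : Fin m → Matrix n n ℂ) : Set (Matrix n n ℂ) :=
  {T | T.IsHermitian ∧ ∀ S ∈ Rspan A, (S * T).trace = 0}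

def herm (n : Type*) [Fintype n] [DecidableEq n] : Submodule ℝ (Matrix n n ℂ) where
  carrier := {T | T.IsHermitian}
  add_mem' := fun h1 h2 => h1.add h2
  zero_mem' := Matrix.isHermitian_zero
  smul_mem' := fun c T h => by
    rw [Set.mem_setOf_eq, Matrix.IsHermitian, Matrix.conjTranspose_smul, star_trivial, h]

def hermPerp {n : Type*} [Fintype n] [DecidableEq n]
    (V : Submodule ℝ (Matrix n n ℂ)) : Submodule ℝ (Matrix n n ℂ) where
  carrier := {T | T.IsHermitian ∧ ∀ S ∈ V, (S * T).trace = 0}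
  add_mem' := fun h1 h2 => ⟨h1.1.add h2.1, fun S hS => by
    rw [mul_add, Matrix.trace_add, h1.2 S hS, h2.2 S hS, add_zero]⟩
  zero_mem' := ⟨Matrix.isHermitian_zero, fun S _ => by simp⟩
  smul_mem' := fun c T h => ⟨by
      rw [Matrix.IsHermitian, Matrix.conjTranspose_smul, star_trivial, h.1],
    fun S hS => by rw [Matrix.mul_smul, Matrix.trace_smul, h.2 S hS, smul_zero]⟩

def tensSub {nA nB : Type*} [Fintype nA] [DecidableEq nA] [Fintype nB] [DecidableEq nB]
    (U : Submodule ℝ (Matrix nA nA ℂ)) (V : Submodule ℝ (Matrix nB nB ℂ)) :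
    Submodule ℝ (Matrix (nA × nB) (nA × nB) ℂ) :=
  Submodule.span ℝ {T | ∃ S ∈ U, ∃ R ∈ V, T = S ⊗ₖ R}

noncomputable def rankPM {n : Type*} [Fintype n] [DecidableEq n]
    (T : Matrix n n ℂ) (hT : T.IsHermitian) : ℕ :=
  min (Finset.univ.filter fun i => 0 < hT.eigenvalues i).card
      (Finset.univ.filter fun i => hT.eigenvalues i < 0).card

/-!
A traceless Hermitian matrix of rank two has exactly two nonzero eigenvalues `λ` and `-λ`, so it
is `λ • (P - Q)` for the two (distinct) eigenprojections `P`, `Q`, which are pure states.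
Conversely, the difference of two distinct pure states is Hermitian, traceless, nonzero and of
rank at most two; rank one is impossible because a Hermitian matrix of rank one has its single
nonzero eigenvalue as trace. Finally, since the identity lies in `R(A)`, a Hermitian difference
`P - Q` lies in `R(A)^⊥` exactly when `P` and `Q` have the same outcome statistics.
-/

namespace Matrix

theorem rank_sub_le {K m n : Type*} [Field K] [Fintype n] (A B : Matrix m n K) :
    (A - B).rank ≤ A.rank + B.rank := by
  have hrange : LinearMap.range (A - B).mulVecLin ≤
      LinearMap.range A.mulVecLin ⊔ LinearMap.range B.mulVecLin := by
    rw [mulVecLin, map_sub, sub_eq_add_neg, ← LinearMap.range_neg B.mulVecLin]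
    exact LinearMap.range_add_le _ _
  exact (Submodule.finrank_mono hrange).trans (Submodule.finrank_add_le_finrank_add_finrank _ _)

variable {𝕜 n : Type*} [RCLike 𝕜] [Fintype n] [DecidableEq n]

theorem IsHermitian.trace_eq_rank_of_isIdempotentElem {P : Matrix n n 𝕜} (hP : P.IsHermitian)
    (hidem : IsIdempotentElem P) : P.trace = P.rank := by
  have hzero_one (i : n) : hP.eigenvalues i = 0 ∨ hP.eigenvalues i = 1 :=
    hidem.spectrum_subset ℝ (hP.eigenvalues_mem_spectrum_real i)
  rw [hP.trace_eq_sum_eigenvalues, hP.rank_eq_card_non_zero_eigs, Fintype.card_subtype,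
    Finset.card_eq_sum_ones, Finset.sum_filter, Nat.cast_sum]
  refine Finset.sum_congr rfl fun i _ => ?_
  rcases hzero_one i with h | h <;> simp [h]

theorem IsHermitian.rank_ne_one_of_trace_eq_zero {T : Matrix n n 𝕜} (hT : T.IsHermitian)
    (htr : T.trace = 0) : T.rank ≠ 1 := by
  intro hrank
  rw [hT.rank_eq_card_non_zero_eigs, Fintype.card_eq_one_iff] at hrank
  obtain ⟨⟨k, hk⟩, huniq⟩ := hrank
  have hother (i : n) (hi : i ≠ k) : hT.eigenvalues i = 0 := by
    by_contra h
    exact hi (congrArg Subtype.val (huniq ⟨i, h⟩))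
  rw [hT.trace_eq_sum_eigenvalues, Finset.sum_eq_single k (fun i _ hi => by simp [hother i hi])
    (by simp)] at htr
  exact hk (RCLike.ofReal_eq_zero.mp htr)

theorem IsHermitian.exists_eigenvalues_eq_smul_sub_of_rank_eq_two {T : Matrix n n 𝕜}
    (hT : T.IsHermitian) (htr : T.trace = 0) (hrank : T.rank = 2) :
    ∃ a b : n, a ≠ b ∧ RCLike.ofReal ∘ hT.eigenvalues =
      (hT.eigenvalues a : 𝕜) • (Pi.single a 1 - Pi.single b 1 : n → 𝕜) := by
  rw [hT.rank_eq_card_non_zero_eigs, ← Nat.card_eq_fintype_card, Nat.card_eq_two_iff] at hrank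
  obtain ⟨⟨a, ha⟩, ⟨b, hb⟩, hne, huniv⟩ := hrank
  have hab : a ≠ b := fun h => hne (Subtype.ext h)
  have hother (i : n) (hia : i ≠ a) (hib : i ≠ b) : hT.eigenvalues i = 0 := by
    by_contra h
    have hi : (⟨i, h⟩ : {i // hT.eigenvalues i ≠ 0}) ∈ ({⟨a, ha⟩, ⟨b, hb⟩} : Set _) :=
      huniv ▸ Set.mem_univ _
    rcases hi with hi | hi
    exacts [hia (congrArg Subtype.val hi), hib (congrArg Subtype.val hi)]
  have hsum : hT.eigenvalues b = -hT.eigenvalues a := by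
    rw [hT.trace_eq_sum_eigenvalues, Finset.sum_eq_add a b hab
      (fun i _ hi => by simp [hother i hi.1 hi.2]) (by simp) (by simp),
      ← RCLike.ofReal_add, RCLike.ofReal_eq_zero] at htr
    exact eq_neg_of_add_eq_zero_right htr
  refine ⟨a, b, hab, funext fun i => ?_⟩
  by_cases hia : i = a
  · subst hia; simp [hab]
  by_cases hib : i = b
  · subst hib; simp [hia, hsum]
  · simp [hia, hib, hother i hia hib]

end Matrix

section PureState

variable {n : Type*} [Fintype n] [DecidableEq n]

theorem isPureState_diagonal_single (k : n) : IsPureState (diagonal (Pi.single k (1 : ℂ))) := by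
  refine ⟨isHermitian_diagonal_iff.mpr fun i => ?_, ?_, ?_⟩
  · by_cases h : i = k <;> simp [h, IsSelfAdjoint]
  · rw [diagonal_mul_diagonal]
    congr 1
    funext i
    by_cases h : i = k <;> simp [h]
  · rw [rank_diagonal, Fintype.card_eq_one_iff]
    refine ⟨⟨k, by simp⟩, fun ⟨i, hi⟩ => ?_⟩
    by_cases h : i = k
    · simp [h]
    · simp [h] at hi

theorem IsPureState.conj {P : Matrix n n ℂ} (hP : IsPureState P) (U : unitaryGroup n ℂ) :
    IsPureState (Unitary.conjStarAlgAut ℂ _ U P) := by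
  obtain ⟨hH, hidem, hrank⟩ := hP
  refine ⟨?_, ?_, ?_⟩
  · rw [IsHermitian, ← star_eq_conjTranspose, ← map_star, star_eq_conjTranspose, hH]
  · rw [← map_mul, hidem]
  · rw [Unitary.conjStarAlgAut_apply, rank_mul_eq_left_of_isUnit_det (star (U : Matrix n n ℂ)) _
        (UnitaryGroup.det_isUnit (star U)),
      rank_mul_eq_right_of_isUnit_det _ _ (UnitaryGroup.det_isUnit U), hrank]

theorem IsPureState.trace_eq_one {P : Matrix n n ℂ} (hP : IsPureState P) : P.trace = 1 := by
  obtain ⟨hH, hidem, hrank⟩ := hP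
  rw [hH.trace_eq_rank_of_isIdempotentElem hidem, hrank, Nat.cast_one]

theorem IsPureState.rank_sub_eq_two {P Q : Matrix n n ℂ} (hP : IsPureState P) (hQ : IsPureState Q)
    (hPQ : P ≠ Q) : (P - Q).rank = 2 := by
  have hH : (P - Q).IsHermitian := hP.1.sub hQ.1
  have hle : (P - Q).rank ≤ 2 := (rank_sub_le P Q).trans_eq (by rw [hP.2.2, hQ.2.2])
  have hne_zero : (P - Q).rank ≠ 0 := by
    rw [hH.rank_eq_card_non_zero_eigs, ← Nat.pos_iff_ne_zero, Fintype.card_pos_iff,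
      nonempty_subtype, ← Function.ne_iff, Ne, ← Pi.zero_def, hH.eigenvalues_eq_zero_iff]
    exact sub_ne_zero.mpr hPQ
  have hne_one : (P - Q).rank ≠ 1 :=
    hH.rank_ne_one_of_trace_eq_zero (by rw [trace_sub, hP.trace_eq_one, hQ.trace_eq_one, sub_self])
  omega

theorem Matrix.IsHermitian.exists_eq_smul_sub_of_rank_eq_two {T : Matrix n n ℂ}
    (hT : T.IsHermitian) (htr : T.trace = 0) (hrank : T.rank = 2) :
    ∃ c : ℝ, ∃ P Q : Matrix n n ℂ, IsPureState P ∧ IsPureState Q ∧ P ≠ Q ∧ T = c • (P - Q) := by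
  obtain ⟨a, b, hab, heig⟩ := hT.exists_eigenvalues_eq_smul_sub_of_rank_eq_two htr hrank
  let conj := Unitary.conjStarAlgAut ℂ _ hT.eigenvectorUnitary
  refine ⟨hT.eigenvalues a, conj (diagonal (Pi.single a 1)), conj (diagonal (Pi.single b (1 : ℂ))),
    (isPureState_diagonal_single a).conj _, (isPureState_diagonal_single b).conj _, ?_, ?_⟩
  · refine conj.injective.ne fun h => ?_
    simpa [hab] using congrFun (congrFun h a) a
  · conv_lhs => rw [hT.spectral_theorem, heig, diagonal_smul, Pi.sub_def, ← diagonal_sub, map_smul,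
      map_sub]
    rw [RCLike.real_smul_eq_coe_smul (K := ℂ)]

end PureState

section RPerp

variable {n : Type*} [Fintype n] [DecidableEq n] {m : ℕ} {A : Fin m → Matrix n n ℂ}

theorem mem_RPerp_iff {T : Matrix n n ℂ} :
    T ∈ RPerp A ↔ T.IsHermitian ∧ ∀ x, (A x * T).trace = 0 := by
  refine ⟨fun hT => ⟨hT.1, fun x => hT.2 _ (Submodule.subset_span ⟨x, rfl⟩)⟩,
    fun ⟨hT, hA⟩ => ⟨hT, fun S hS => ?_⟩⟩
  induction hS using Submodule.span_induction with
  | mem S hS => obtain ⟨x, rfl⟩ := hS; exact hA x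
  | zero => simp
  | add S R _ _ hS hR => rw [add_mul, trace_add, hS, hR, add_zero]
  | smul c S _ hS => rw [smul_mul, trace_smul, hS, smul_zero]

-- `RPerp A` is the carrier of the submodule `hermPerp (Rspan A)`.
theorem smul_mem_RPerp {T : Matrix n n ℂ} (hT : T ∈ RPerp A) (c : ℝ) : c • T ∈ RPerp A :=
  (hermPerp (Rspan A)).smul_mem c hT

theorem sub_mem_RPerp_iff {P Q : Matrix n n ℂ} (hP : P.IsHermitian) (hQ : Q.IsHermitian) :
    P - Q ∈ RPerp A ↔ ∀ x, (P * A x).trace = (Q * A x).trace := by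
  simp only [mem_RPerp_iff, hP.sub hQ, true_and, mul_sub, trace_sub, sub_eq_zero,
    trace_mul_comm (A _)]

theorem IsPOVM.trace_eq_zero_of_mem_RPerp (hA : IsPOVM A) {T : Matrix n n ℂ} (hT : T ∈ RPerp A) :
    T.trace = 0 := by
  rw [← one_mul T, ← hA.2, Finset.sum_mul, trace_sum]
  exact Finset.sum_eq_zero fun x _ => (mem_RPerp_iff.mp hT).2 x

end RPerp

/-- A POVM `A` is pure state informationally complete iff `R(A)^⊥`
contains no selfadjoint operator of rank 2. -/
theorem stmt3 {d m : ℕ} (A : Fin m → Matrix (Fin d) (Fin d) ℂ) (hA : IsPOVM A) :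
    (∀ P Q : Matrix (Fin d) (Fin d) ℂ, IsPureState P → IsPureState Q →
      (∀ x, (P * A x).trace = (Q * A x).trace) → P = Q) ↔
    ¬ ∃ T ∈ RPerp A, T.rank = 2 := by
  constructor
  · rintro hPSIC ⟨T, hT, hrank⟩
    obtain ⟨c, P, Q, hP, hQ, hPQ, rfl⟩ :=
      hT.1.exists_eq_smul_sub_of_rank_eq_two (hA.trace_eq_zero_of_mem_RPerp hT) hrank
    have hc : c ≠ 0 := by
      rintro rfl
      simp at hrank
    have hsub : P - Q ∈ RPerp A := by simpa [smul_smul, hc] using smul_mem_RPerp hT c⁻¹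
    exact hPQ (hPSIC P Q hP hQ ((sub_mem_RPerp_iff hP.1 hQ.1).mp hsub))
  · rintro hno P Q hP hQ hstat
    by_contra hPQ
    exact hno ⟨P - Q, (sub_mem_RPerp_iff hP.1 hQ.1).mpr hstat, hP.rank_sub_eq_two hQ hPQ⟩
end
end

section
/- Every nonzero traceless selfadjoint 2×2 complex matrix has rank exactly 2. Consequently, a qubit POVM is pure state informationally complete if and only if it is informationally complete (i.e., R(A)^⊥ = {0}). -/
open Matrix Kronecker
open scoped ComplexOrder

noncomputable section

/-- Every nonzero traceless selfadjoint 2×2 complex matrix has rank exactly 2;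
consequently a qubit POVM is pure state informationally complete iff it is informationally
complete, i.e. `R(A)^⊥ = {0}`. -/
theorem stmt5 :
    (∀ T : Matrix (Fin 2) (Fin 2) ℂ, T.IsHermitian → T.trace = 0 → T ≠ 0 → T.rank = 2) ∧
    (∀ (m : ℕ) (A : Fin m → Matrix (Fin 2) (Fin 2) ℂ), IsPOVM A →
      ((¬ ∃ T ∈ RPerp A, T.rank = 2) ↔ RPerp A = {0})) := by
  have part1 : ∀ T : Matrix (Fin 2) (Fin 2) ℂ, T.IsHermitian → T.trace = 0 → T ≠ 0 →
      T.rank = 2 := by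
    intro T hH htr hne
    have h11 : T 1 1 = - T 0 0 := by
      have := htr; rw [Matrix.trace_fin_two] at this; linear_combination this
    have h00 : star (T 0 0) = T 0 0 := hH.apply 0 0
    have h10 : T 1 0 = star (T 0 1) := (hH.apply 1 0).symm
    have hdet : T.det = -(T 0 0 * T 0 0 + T 0 1 * star (T 0 1)) := by
      rw [Matrix.det_fin_two, h11, h10]; ring
    have hdne : T.det ≠ 0 := by
      intro h0
      rw [hdet, neg_eq_zero] at h0
      have hr : (T 0 0).im = 0 := by
        have := congrArg Complex.im h00
        simp only [Complex.star_def, Complex.conj_im] at this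
        linarith [this]
      have h0re := congrArg Complex.re h0
      simp [Complex.add_re, Complex.mul_re, Complex.mul_im, Complex.star_def,
        Complex.conj_re, Complex.conj_im, hr] at h0re
      have h1 : (T 0 0).re = 0 ∧ ((T 0 1).re = 0 ∧ (T 0 1).im = 0) := by
        refine ⟨?_, ?_, ?_⟩ <;>
          nlinarith [sq_nonneg (T 0 0).re, sq_nonneg (T 0 1).re, sq_nonneg (T 0 1).im]
      have e00 : T 0 0 = 0 := Complex.ext h1.1 hr
      have e01 : T 0 1 = 0 := Complex.ext h1.2.1 h1.2.2
      apply hne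
      ext i j
      fin_cases i <;> fin_cases j <;>
        simp [e00, e01, h11, h10, Matrix.zero_apply]
    have := Matrix.rank_of_isUnit T (by rwa [Matrix.isUnit_iff_isUnit_det, isUnit_iff_ne_zero])
    simpa using this
  refine ⟨part1, ?_⟩
  intro m A hA
  constructor
  · intro hno
    ext T
    simp only [Set.mem_singleton_iff]
    constructor
    · intro hT
      by_contra hne
      have hone : (1 : Matrix (Fin 2) (Fin 2) ℂ) ∈ Rspan A := by
        rw [← hA.2]
        exact Submodule.sum_mem _ fun x _ => Submodule.subset_span ⟨x, rfl⟩
      have htr : T.trace = 0 := by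
        have := hT.2 1 hone
        rwa [one_mul] at this
      exact hno ⟨T, hT, part1 T hT.1 htr hne⟩
    · rintro rfl
      exact ⟨Matrix.isHermitian_zero, fun S _ => by simp⟩
  · intro heq
    rintro ⟨T, hT, hrank⟩
    rw [heq] at hT
    simp only [Set.mem_singleton_iff] at hT
    subst hT
    rw [Matrix.rank_zero] at hrank
    exact (by norm_num : (0:ℕ) ≠ 2) hrank
end
end

section
/- If A is an informationally complete POVM on H_A and B is a pure state informationally complete POVM on H_B, then A⊗B is a pure state informationally complete POVM on H_A ⊗ H_B. -/
open Matrix Kronecker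
open scoped ComplexOrder

noncomputable section

/-! If `T ∈ R(A ⊗ B)^⊥` has rank at most two, compress it along `ψ ↦ e ⊗ ψ` for a vector
`e ∈ H_A`. Since `trace (R * (e ⊗ ·)ᴴ T (e ⊗ ·)) = trace ((e e* ⊗ R) * T)` and `e e* ∈ R(A)` by
informational completeness, the compression lies in `R(B)^⊥`; its rank is at most that of `T`,
so it vanishes. All these compressions vanishing forces `T = 0` by polarization in `e`. -/

theorem Matrix.eq_zero_of_forall_star_dotProduct_mulVec_self {n : Type*} [Fintype n]
    {G : Matrix n n ℂ} (h : ∀ e : n → ℂ, star e ⬝ᵥ G *ᵥ e = 0) : G = 0 := by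
  classical
  have hG : toLpLin 2 2 G = 0 := (inner_map_self_eq_zero _).1 fun x => by
    rw [← inner_conj_symm, EuclideanSpace.inner_eq_star_dotProduct, toLpLin_apply,
      dotProduct_comm, h, map_zero]
  simpa using hG

theorem Matrix.rank_mul_mul_le {l m n o : Type*} [Fintype m] [Fintype n] [Fintype o]
    {R : Type*} [CommSemiring R] [StrongRankCondition R]
    (X : Matrix l m R) (T : Matrix m n R) (Y : Matrix n o R) : (X * T * Y).rank ≤ T.rank :=
  (rank_mul_le_left _ _).trans (rank_mul_le_right _ _)

theorem kronecker_mem_Rspan {ι κ nA nB : Type*} [Fintype nA] [DecidableEq nA] [Fintype nB]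
    [DecidableEq nB] {A : ι → Matrix nA nA ℂ} {B : κ → Matrix nB nB ℂ}
    {S : Matrix nA nA ℂ} {R : Matrix nB nB ℂ} (hS : S ∈ Rspan A) (hR : R ∈ Rspan B) :
    S ⊗ₖ R ∈ Rspan (fun p : ι × κ => A p.1 ⊗ₖ B p.2) := by
  have hmem := Submodule.apply_mem_map₂ (kroneckerBilinear (R := ℝ)) hS hR
  rw [Rspan, Rspan, Submodule.map₂_span_span] at hmem
  refine Submodule.span_mono ?_ hmem
  rintro _ ⟨_, ⟨i, rfl⟩, _, ⟨j, rfl⟩, rfl⟩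
  exact ⟨(i, j), rfl⟩

section KronVecLeft

variable {nA nB : Type*} [Fintype nB] [DecidableEq nB]

variable (nB) in
def kronVecLeft (e : nA → ℂ) : Matrix (nA × nB) nB ℂ :=
  Matrix.of fun x j => e x.1 * (1 : Matrix nB nB ℂ) x.2 j

theorem kronVecLeft_mul_mul_conjTranspose (e : nA → ℂ) (R : Matrix nB nB ℂ) :
    kronVecLeft nB e * R * (kronVecLeft nB e)ᴴ = vecMulVec e (star e) ⊗ₖ R := by
  ext ⟨a, i⟩ ⟨b, j⟩
  simp [kronVecLeft, Matrix.mul_apply, one_apply, vecMulVec_apply, apply_ite (starRingEnd ℂ),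
    mul_right_comm _ (R _ _)]

theorem conjTranspose_kronVecLeft_mul_mul_apply [Fintype nA] (e : nA → ℂ)
    (T : Matrix (nA × nB) (nA × nB) ℂ) (p q : nB) :
    ((kronVecLeft nB e)ᴴ * T * kronVecLeft nB e) p q =
      star e ⬝ᵥ (Matrix.of fun a b => T (a, p) (b, q)) *ᵥ e := by
  rw [dotProduct_mulVec]
  simp [kronVecLeft, Matrix.mul_apply, one_apply, dotProduct, vecMul, Fintype.sum_prod_type,
    Finset.sum_mul, apply_ite (starRingEnd ℂ)]

theorem conjTranspose_kronVecLeft_mul_mul_mem_hermPerp [Fintype nA] [DecidableEq nA]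
    {U : Submodule ℝ (Matrix (nA × nB) (nA × nB) ℂ)} {V : Submodule ℝ (Matrix nB nB ℂ)}
    {e : nA → ℂ} (hUV : ∀ R ∈ V, vecMulVec e (star e) ⊗ₖ R ∈ U)
    {T : Matrix (nA × nB) (nA × nB) ℂ} (hT : T ∈ hermPerp U) :
    (kronVecLeft nB e)ᴴ * T * kronVecLeft nB e ∈ hermPerp V := by
  refine ⟨isHermitian_conjTranspose_mul_mul _ hT.1, fun R hR => ?_⟩
  calc (R * ((kronVecLeft nB e)ᴴ * T * kronVecLeft nB e)).trace
      = (kronVecLeft nB e * R * (kronVecLeft nB e)ᴴ * T).trace := by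
        rw [← Matrix.mul_assoc, trace_mul_comm]
        simp only [Matrix.mul_assoc]
    _ = 0 := by
        rw [kronVecLeft_mul_mul_conjTranspose]
        exact hT.2 _ (hUV R hR)

theorem eq_zero_of_forall_conjTranspose_kronVecLeft_mul_mul_eq_zero [Fintype nA]
    {T : Matrix (nA × nB) (nA × nB) ℂ}
    (h : ∀ e : nA → ℂ, (kronVecLeft nB e)ᴴ * T * kronVecLeft nB e = 0) : T = 0 := by
  ext ⟨a, p⟩ ⟨b, q⟩
  have hblock : (Matrix.of fun a b => T (a, p) (b, q)) = 0 :=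
    eq_zero_of_forall_star_dotProduct_mulVec_self fun e => by
      rw [← conjTranspose_kronVecLeft_mul_mul_apply, h, Matrix.zero_apply]
  exact congrFun₂ hblock a b

end KronVecLeft

theorem stmt12_general {dA dB mA mB : ℕ}
    (A : Fin mA → Matrix (Fin dA) (Fin dA) ℂ) (B : Fin mB → Matrix (Fin dB) (Fin dB) ℂ)
    (hIC : Rspan A = herm (Fin dA))
    (hPB : ∀ T ∈ hermPerp (Rspan B), T ≠ 0 → 3 ≤ T.rank) :
    ∀ T ∈ hermPerp (Rspan (fun p : Fin mA × Fin mB => A p.1 ⊗ₖ B p.2)),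
      T ≠ 0 → 3 ≤ T.rank := by
  intro T hT hT0
  by_contra! hrank
  refine hT0 (eq_zero_of_forall_conjTranspose_kronVecLeft_mul_mul_eq_zero fun e => ?_)
  have hE : vecMulVec e (star e) ∈ Rspan A := hIC ▸ (posSemidef_vecMulVec_self_star e).isHermitian
  by_contra hne
  have hrank_ge := hPB _
    (conjTranspose_kronVecLeft_mul_mul_mem_hermPerp (fun R hR => kronecker_mem_Rspan hE hR) hT) hne
  have hrank_le := rank_mul_mul_le (kronVecLeft (Fin dB) e)ᴴ T (kronVecLeft (Fin dB) e)
  omega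

/-- If `A` is informationally complete and `B` is pure state informationally
complete (every nonzero element of `R(B)^⊥` has rank ≥ 3), then `A ⊗ B` is pure state
informationally complete. -/
theorem stmt12 {dA dB mA mB : ℕ}
    (A : Fin mA → Matrix (Fin dA) (Fin dA) ℂ) (B : Fin mB → Matrix (Fin dB) (Fin dB) ℂ)
    (hA : IsPOVM A) (hB : IsPOVM B)
    (hIC : Rspan A = herm (Fin dA))
    (hPB : ∀ T ∈ hermPerp (Rspan B), T ≠ 0 → 3 ≤ T.rank) :
    ∀ T ∈ hermPerp (Rspan (fun p : Fin mA × Fin mB => A p.1 ⊗ₖ B p.2)),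
      T ≠ 0 → 3 ≤ T.rank :=
  stmt12_general A B hIC hPB
end
end

section
/- Let A be a pure state informationally complete POVM on C^3 that is not informationally complete. Then R(A)^⊥ is one-dimensional, spanned by an invertible (full rank) traceless selfadjoint 3×3 matrix S. -/
open Matrix Kronecker
open scoped ComplexOrder

noncomputable section

/-!
Because `1 ∈ R(A)`, every element of `R(A)^⊥` is traceless, and a nonzero traceless Hermitian
`3 × 3` matrix has rank 2 or 3; pure state informational completeness rules out rank 2, so every
nonzero element of `R(A)^⊥` is invertible. The real trace pairing on matrices is nondegenerate, so
`R(A)^⊥ ≠ 0` as soon as `R(A)` is a proper subspace of the Hermitian matrices. Finally, for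
Hermitian `S, T` of odd size the real function `t ↦ det ((1 - t²) • S - t • T)` takes opposite
values at `t = -1` and `t = 1`, so some nontrivial real combination of `S` and `T` is singular;
inside `R(A)^⊥` that combination must vanish, hence `R(A)^⊥` is a line.
-/

namespace Matrix.IsHermitian
variable {𝕜 n : Type*} [RCLike 𝕜] [Fintype n] [DecidableEq n] {A : Matrix n n 𝕜}

theorem ofReal_re_det (hA : A.IsHermitian) : ((RCLike.re A.det : ℝ) : 𝕜) = A.det := by
  rw [hA.det_eq_prod_eigenvalues, ← RCLike.ofReal_prod, RCLike.ofReal_re]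

theorem rank_pos (hA : A.IsHermitian) (h : A ≠ 0) : 0 < A.rank := by
  rw [hA.rank_eq_card_non_zero_eigs, Fintype.card_pos_iff]
  obtain ⟨i, hi⟩ := Function.ne_iff.mp (mt hA.eigenvalues_eq_zero_iff.mp h)
  exact ⟨⟨i, hi⟩⟩

theorem rank_ne_one_of_trace_eq_zero_s13 (hA : A.IsHermitian) (htr : A.trace = 0) : A.rank ≠ 1 := by
  rw [hA.rank_eq_card_non_zero_eigs, Ne, Fintype.card_eq_one_iff]
  rintro ⟨⟨i, hi⟩, hunique⟩
  have hzero : ∀ j ≠ i, hA.eigenvalues j = 0 := fun j hj => by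
    by_contra h
    exact hj (congrArg Subtype.val (hunique ⟨j, h⟩))
  rw [hA.trace_eq_sum_eigenvalues, Finset.sum_eq_single i (fun j _ hj => by simp [hzero j hj])
    (by simp)] at htr
  exact hi (by exact_mod_cast htr)

theorem det_ne_zero_of_rank_eq_card (hA : A.IsHermitian) (h : A.rank = Fintype.card n) :
    A.det ≠ 0 := by
  rw [hA.det_eq_prod_eigenvalues, Finset.prod_ne_zero_iff]
  intro i _ hi
  have hlt := Fintype.card_subtype_lt (p := fun j => hA.eigenvalues j ≠ 0) (x := i)
    (by simpa using hi)
  rw [← hA.rank_eq_card_non_zero_eigs, h] at hlt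
  exact hlt.false

end Matrix.IsHermitian

section OddDimension
variable {𝕜 n : Type*} [RCLike 𝕜] [Fintype n] [DecidableEq n]

theorem Matrix.exists_det_smul_add_smul_eq_zero (hn : Odd (Fintype.card n)) {A B : Matrix n n 𝕜}
    (hA : A.IsHermitian) (hB : B.IsHermitian) :
    ∃ a b : ℝ, (a, b) ≠ 0 ∧ (a • A + b • B).det = 0 := by
  set f : ℝ → ℝ := fun t => RCLike.re ((1 - t ^ 2) • A + (-t) • B).det
  have hf : Continuous f := by fun_prop
  have hf1 : f 1 = - f (-1) := by
    simp [f, det_neg, hn.neg_one_pow]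
  obtain ⟨t, -, ht⟩ : ∃ t ∈ Set.uIcc (-1) 1, f t = 0 := by
    refine intermediate_value_uIcc hf.continuousOn ?_
    rw [Set.mem_uIcc, hf1]
    rcases le_total (f (-1)) 0 with h | h
    · left; constructor <;> linarith
    · right; constructor <;> linarith
  refine ⟨1 - t ^ 2, -t, fun h => ?_, ?_⟩
  · simp only [Prod.mk_eq_zero, neg_eq_zero] at h
    simp [h.2] at h
  · have hherm : ((1 - t ^ 2) • A + (-t) • B).IsHermitian :=
      (hA.smul (.all _)).add (hB.smul (.all _))
    rw [← hherm.ofReal_re_det]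
    exact_mod_cast ht

theorem Matrix.eq_span_singleton_of_det_ne_zero (hn : Odd (Fintype.card n))
    {W : Submodule ℝ (Matrix n n 𝕜)} (hW : ∀ X ∈ W, X.IsHermitian)
    (hdet : ∀ X ∈ W, X ≠ 0 → X.det ≠ 0) {T : Matrix n n 𝕜} (hT : T ∈ W) (hT0 : T ≠ 0) :
    W = ℝ ∙ T := by
  refine le_antisymm (fun X hX => ?_) ((Submodule.span_singleton_le_iff_mem _ _).mpr hT)
  obtain ⟨a, b, hab, hdet0⟩ := exists_det_smul_add_smul_eq_zero hn (hW X hX) (hW T hT)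
  have hcomb : a • X + b • T = 0 := by
    by_contra h
    exact hdet _ (W.add_mem (W.smul_mem a hX) (W.smul_mem b hT)) h hdet0
  have ha : a ≠ 0 := by
    rintro rfl
    have hb : b ≠ 0 := by simpa using hab
    simp [hb, hT0] at hcomb
  have hX : X + (a⁻¹ * b) • T = 0 := by
    simpa only [smul_add, smul_smul, inv_mul_cancel₀ ha, one_smul, smul_zero]
      using congrArg (a⁻¹ • ·) hcomb
  refine Submodule.mem_span_singleton.mpr ⟨-(a⁻¹ * b), ?_⟩
  rw [neg_smul, neg_eq_iff_add_eq_zero, add_comm, hX]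

end OddDimension

section TraceDuality
variable {n : Type*} [Fintype n] [DecidableEq n]

def Matrix.reTraceForm : Matrix n n ℂ →ₗ[ℝ] Module.Dual ℝ (Matrix n n ℂ) :=
  (LinearMap.mul ℝ (Matrix n n ℂ)).flip.compr₂ (Complex.reLm ∘ₗ Matrix.traceLinearMap n ℝ ℂ)

@[simp]
theorem Matrix.reTraceForm_apply (M S : Matrix n n ℂ) : reTraceForm M S = (S * M).trace.re :=
  rfl

theorem Matrix.reTraceForm_injective : Function.Injective (reTraceForm (n := n)) := by
  rw [← LinearMap.ker_eq_bot, LinearMap.ker_eq_bot']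
  intro M hM
  have h1 := LinearMap.congr_fun hM Mᴴ
  have h2 := LinearMap.congr_fun hM (Complex.I • Mᴴ)
  simp only [reTraceForm_apply, LinearMap.zero_apply, smul_mul, trace_smul, smul_eq_mul,
    Complex.I_mul_re, neg_eq_zero] at h1 h2
  exact trace_conjTranspose_mul_self_eq_zero_iff.mp (Complex.ext h1 h2)

theorem Matrix.reTraceForm_surjective : Function.Surjective (reTraceForm (n := n)) :=
  (LinearMap.injective_iff_surjective_of_finrank_eq_finrank
    (Subspace.dual_finrank_eq (K := ℝ)).symm).mp reTraceForm_injective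

theorem Matrix.exists_isHermitian_trace_mul_eq (f : Module.Dual ℝ (Matrix n n ℂ)) :
    ∃ T : Matrix n n ℂ, T.IsHermitian ∧
      ∀ S : Matrix n n ℂ, S.IsHermitian → (S * T).trace = f S := by
  obtain ⟨M, rfl⟩ := reTraceForm_surjective f
  refine ⟨(2⁻¹ : ℝ) • (M + Mᴴ), ?_, fun S hS => ?_⟩
  · rw [IsHermitian, conjTranspose_smul, star_trivial, conjTranspose_add,
      conjTranspose_conjTranspose, add_comm]
  · have hconj : (S * Mᴴ).trace = star (S * M).trace := by
      rw [← hS.eq, ← conjTranspose_mul, trace_conjTranspose, trace_mul_comm, hS.eq]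
    rw [Matrix.mul_smul, mul_add, trace_smul, trace_add, hconj, Complex.star_def,
      Complex.add_conj, reTraceForm_apply, Complex.real_smul]
    push_cast
    ring

theorem exists_mem_hermPerp_ne_zero {V : Submodule ℝ (Matrix n n ℂ)} (hV : V ≤ herm n)
    (hne : V ≠ herm n) : ∃ T ∈ hermPerp V, T ≠ 0 := by
  obtain ⟨X, hX, hXV⟩ := SetLike.exists_of_lt (lt_of_le_of_ne hV hne)
  obtain ⟨f, hfX, hVf⟩ := Submodule.exists_le_ker_of_notMem hXV
  obtain ⟨T, hT, hTf⟩ := exists_isHermitian_trace_mul_eq f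
  refine ⟨T, ⟨hT, fun S hS => ?_⟩, fun h => hfX ?_⟩
  · rw [hTf S (hV hS), hVf hS, Complex.ofReal_zero]
  · have hTX := hTf X hX
    rw [h, mul_zero, trace_zero] at hTX
    exact_mod_cast hTX.symm

end TraceDuality

theorem IsPOVM.rspan_le_herm {n : Type*} [Fintype n] [DecidableEq n] {m : ℕ}
    {A : Fin m → Matrix n n ℂ} (hA : IsPOVM A) : Rspan A ≤ herm n :=
  Submodule.span_le.mpr (Set.range_subset_iff.mpr fun x => (hA.1 x).isHermitian)

theorem IsPOVM.one_mem_rspan {n : Type*} [Fintype n] [DecidableEq n] {m : ℕ}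
    {A : Fin m → Matrix n n ℂ} (hA : IsPOVM A) : (1 : Matrix n n ℂ) ∈ Rspan A :=
  hA.2 ▸ Submodule.sum_mem _ fun x _ => Submodule.subset_span ⟨x, rfl⟩

theorem trace_eq_zero_of_mem_hermPerp {n : Type*} [Fintype n] [DecidableEq n]
    {V : Submodule ℝ (Matrix n n ℂ)} (hV : 1 ∈ V) {T : Matrix n n ℂ} (hT : T ∈ hermPerp V) :
    T.trace = 0 := by
  simpa using hT.2 1 hV

theorem Matrix.IsHermitian.rank_eq_three_of_trace_eq_zero {T : Matrix (Fin 3) (Fin 3) ℂ}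
    (hT : T.IsHermitian) (htr : T.trace = 0) (h2 : T.rank ≠ 2) (h0 : T ≠ 0) : T.rank = 3 := by
  have hpos := hT.rank_pos h0
  have h1 := hT.rank_ne_one_of_trace_eq_zero_s13 htr
  have hle : T.rank ≤ 3 := by simpa using T.rank_le_card_width
  omega

/-- A pure state informationally complete POVM on `C^3` which is not
informationally complete has `R(A)^⊥` one-dimensional, spanned by an invertible (rank 3)
traceless selfadjoint matrix. -/
theorem stmt13 {m : ℕ} (A : Fin m → Matrix (Fin 3) (Fin 3) ℂ) (hA : IsPOVM A)
    (hPSIC : ¬ ∃ T ∈ hermPerp (Rspan A), T.rank = 2)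
    (hnIC : Rspan A ≠ herm (Fin 3)) :
    ∃ S : Matrix (Fin 3) (Fin 3) ℂ, S.IsHermitian ∧ S.trace = 0 ∧ S.rank = 3 ∧
      hermPerp (Rspan A) = Submodule.span ℝ {S} := by
  have htr : ∀ T ∈ hermPerp (Rspan A), T.trace = 0 := fun T hT =>
    trace_eq_zero_of_mem_hermPerp hA.one_mem_rspan hT
  have hrank : ∀ T ∈ hermPerp (Rspan A), T ≠ 0 → T.rank = 3 := fun T hT hT0 =>
    hT.1.rank_eq_three_of_trace_eq_zero (htr T hT) (fun h => hPSIC ⟨T, hT, h⟩) hT0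
  obtain ⟨T, hT, hT0⟩ := exists_mem_hermPerp_ne_zero hA.rspan_le_herm hnIC
  refine ⟨T, hT.1, htr T hT, hrank T hT hT0, ?_⟩
  refine eq_span_singleton_of_det_ne_zero (by decide) (fun X hX => ?_) (fun X hX hX0 => ?_) hT hT0
  · exact hX.1
  · exact hX.1.det_ne_zero_of_rank_eq_card (by rw [hrank X hX hX0, Fintype.card_fin])
end
end

section
/- For the selfadjoint block matrix T̃ = [[0, C],[C*, 0]] with C an operator on a finite-dimensional Hilbert space K, one has rank±(T̃) ≥ max{rank±(Re C), rank±(Im C)}. -/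
open Matrix Kronecker
open scoped ComplexOrder

noncomputable section

/-!
On the vectors `(v, v)` and `(v, i v)` of `K ⊕ K` (up to normalization, columns of the unitaries `U`
and `V`) the quadratic form of `T̃` equals `2 ⟪v, Re C v⟫` and `-2 ⟪v, Im C v⟫`.
Variational Cauchy interlacing: the number of positive eigenvalues of a selfadjoint operator is the
largest dimension of a subspace on which its quadratic form is positive definite. Hence the
positive and negative eigenvalue counts of `Re C` and of `-Im C` are bounded by the corresponding
counts of `T̃`, and so are their minima.
-/

open Finset Module

section Eigenbasis

variable {𝕜 E ι : Type*} [RCLike 𝕜] [NormedAddCommGroup E] [InnerProductSpace 𝕜 E] [Fintype ι]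

def IsEigenbasis (T : E →ₗ[𝕜] E) (b : OrthonormalBasis ι 𝕜 E) (μ : ι → ℝ) : Prop :=
  ∀ i, T (b i) = (μ i : 𝕜) • b i

variable {T : E →ₗ[𝕜] E} {b : OrthonormalBasis ι 𝕜 E} {μ : ι → ℝ}

lemma IsEigenbasis.neg (hT : IsEigenbasis T b μ) : IsEigenbasis (-T) b (-μ) := fun i => by
  simp [hT i, neg_smul]

lemma IsEigenbasis.repr_apply (hT : IsEigenbasis T b μ) (x : E) (i : ι) :
    b.repr (T x) i = μ i * b.repr x i := by
  classical
  conv_lhs => rw [← b.sum_repr x]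
  simp [hT _, b.repr_self, Pi.single_apply, RCLike.real_smul_eq_coe_mul, mul_comm]

lemma IsEigenbasis.re_inner_apply (hT : IsEigenbasis T b μ) (x : E) :
    RCLike.re (inner 𝕜 x (T x)) = ∑ i, μ i * ‖b.repr x i‖ ^ 2 := by
  rw [← b.repr.inner_map_map, PiLp.inner_apply, map_sum]
  refine Finset.sum_congr rfl fun i _ => ?_
  rw [hT.repr_apply, RCLike.inner_apply, mul_assoc, RCLike.mul_conj]
  norm_cast

lemma IsEigenbasis.finrank_le_card_pos (hT : IsEigenbasis T b μ)
    {G : Type*} [AddCommGroup G] [Module 𝕜 G] (L : G →ₗ[𝕜] E)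
    (hL : ∀ y, y ≠ 0 → 0 < RCLike.re (inner 𝕜 (L y) (T (L y)))) :
    finrank 𝕜 G ≤ #{i | 0 < μ i} := by
  -- the coordinates of `L y` along the eigenvectors with positive eigenvalue determine `y`
  let P : G →ₗ[𝕜] ({i // 0 < μ i} → 𝕜) := LinearMap.funLeft 𝕜 𝕜 Subtype.val ∘ₗ
    (WithLp.linearEquiv 2 𝕜 (ι → 𝕜)).toLinearMap ∘ₗ b.repr.toLinearMap ∘ₗ L
  have hP : Function.Injective P := by
    refine (injective_iff_map_eq_zero P).2 fun y hy => ?_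
    by_contra hy0
    have hnonpos : RCLike.re (inner 𝕜 (L y) (T (L y))) ≤ 0 := by
      rw [hT.re_inner_apply]
      refine Finset.sum_nonpos fun i _ => ?_
      by_cases hi : 0 < μ i
      · have : b.repr (L y) i = 0 := congr_fun hy ⟨i, hi⟩
        simp [this]
      · exact mul_nonpos_of_nonpos_of_nonneg (not_lt.1 hi) (sq_nonneg _)
    exact hnonpos.not_gt (hL y hy0)
  simpa [Fintype.card_subtype] using LinearMap.finrank_le_finrank_of_injective hP

lemma OrthonormalBasis.finrank_span_range_subtype (p : ι → Prop) [DecidablePred p] :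
    finrank 𝕜 (Submodule.span 𝕜 (Set.range fun i : {i // p i} => b i)) = #{i | p i} := by
  have hli : LinearIndependent 𝕜 fun i : {i // p i} => b i :=
    b.orthonormal.linearIndependent.comp _ Subtype.val_injective
  rw [finrank_span_eq_card hli, Fintype.card_subtype]

lemma IsEigenbasis.re_inner_pos_of_mem_span (hT : IsEigenbasis T b μ) {x : E}
    (hx : x ∈ Submodule.span 𝕜 (Set.range fun i : {i // 0 < μ i} => b i)) (hx0 : x ≠ 0) :
    0 < RCLike.re (inner 𝕜 x (T x)) := by
  have hsupp : ∀ j, b.repr x j ≠ 0 → 0 < μ j := by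
    intro j hj
    by_contra hμ
    have hker : x ∈ LinearMap.ker (b.toBasis.coord j) := by
      refine Submodule.span_le.2 ?_ hx
      classical
      rintro _ ⟨i, rfl⟩
      have : j ≠ i := fun h => hμ (h ▸ i.2)
      simp [b.repr_self, this]
    exact hj (by simpa using hker)
  obtain ⟨j, hj⟩ : ∃ j, b.repr x j ≠ 0 := by
    by_contra! h
    exact hx0 (b.repr.injective (by ext j; simp [h j]))
  rw [hT.re_inner_apply]
  refine Finset.sum_pos' (fun i _ => ?_) ⟨j, mem_univ j, by have := hsupp j hj; positivity⟩
  by_cases hi : b.repr x i = 0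
  · simp [hi]
  · have := hsupp i hi
    positivity

theorem IsEigenbasis.card_pos_le_card_pos {F κ : Type*} [NormedAddCommGroup F]
    [InnerProductSpace 𝕜 F] [Fintype κ] {S : F →ₗ[𝕜] F} {c : OrthonormalBasis κ 𝕜 F} {ν : κ → ℝ}
    (hS : IsEigenbasis S c ν) (hT : IsEigenbasis T b μ) (L : F →ₗ[𝕜] E)
    (hL : ∀ x, 0 < RCLike.re (inner 𝕜 x (S x)) → 0 < RCLike.re (inner 𝕜 (L x) (T (L x)))) :
    #{i | 0 < ν i} ≤ #{i | 0 < μ i} := by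
  rw [← c.finrank_span_range_subtype]
  refine hT.finrank_le_card_pos (L ∘ₗ Submodule.subtype _) fun y hy => hL _ ?_
  exact hS.re_inner_pos_of_mem_span y.2 (by simpa using hy)

theorem IsEigenbasis.card_pos_le_and_card_neg_le {F κ : Type*} [NormedAddCommGroup F]
    [InnerProductSpace 𝕜 F] [Fintype κ] {S : F →ₗ[𝕜] F} {c : OrthonormalBasis κ 𝕜 F} {ν : κ → ℝ}
    (hS : IsEigenbasis S c ν) (hT : IsEigenbasis T b μ) (L : F →ₗ[𝕜] E) {a : ℝ} (ha : 0 < a)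
    (hL : ∀ x, RCLike.re (inner 𝕜 (L x) (T (L x))) = a * RCLike.re (inner 𝕜 x (S x))) :
    #{i | 0 < ν i} ≤ #{i | 0 < μ i} ∧ #{i | ν i < 0} ≤ #{i | μ i < 0} := by
  refine ⟨hS.card_pos_le_card_pos hT L fun x hx => ?_, ?_⟩
  · rw [hL]
    exact mul_pos ha hx
  · simpa using hS.neg.card_pos_le_card_pos hT.neg L fun x hx => by
      simp only [LinearMap.neg_apply, inner_neg_right, map_neg, hL] at hx ⊢
      nlinarith

end Eigenbasis

section Matrix

variable {𝕜 n : Type*} [RCLike 𝕜] [Fintype n]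

lemma Matrix.IsHermitian.isEigenbasis [DecidableEq n] {A : Matrix n n 𝕜} (hA : A.IsHermitian) :
    IsEigenbasis (toEuclideanLin A) hA.eigenvectorBasis hA.eigenvalues := fun i => by
  apply WithLp.ofLp_injective
  rw [ofLp_toLpLin, toLin'_apply, WithLp.ofLp_smul, hA.mulVec_eigenvectorBasis,
    RCLike.real_smul_eq_coe_smul (K := 𝕜)]

def sumLift (c : 𝕜) : EuclideanSpace 𝕜 n →ₗ[𝕜] EuclideanSpace 𝕜 (n ⊕ n) where
  toFun v := WithLp.toLp 2 (Sum.elim v (c • v))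
  map_add' u v := by ext (i | i) <;> simp
  map_smul' a v := by ext (i | i) <;> simp [mul_left_comm]

lemma inner_sumLift_toEuclideanLin_fromBlocks [DecidableEq n] (C : Matrix n n 𝕜) (c : 𝕜)
    (v : EuclideanSpace 𝕜 n) :
    inner 𝕜 (sumLift c v) (toEuclideanLin (fromBlocks 0 C Cᴴ 0) (sumLift c v)) =
      inner 𝕜 v (toEuclideanLin (c • C + star c • Cᴴ) v) := by
  simp only [EuclideanSpace.inner_eq_star_dotProduct]
  simp [sumLift, fromBlocks_mulVec, dotProduct, Fintype.sum_sum_type, mulVec_smul, add_mul,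
    Finset.sum_add_distrib]
  exact Finset.sum_congr rfl fun _ _ => by ring

lemma re_inner_sumLift_one_fromBlocks [DecidableEq n] (C : Matrix n n ℂ) (v : EuclideanSpace ℂ n) :
    RCLike.re (inner ℂ (sumLift 1 v) (toEuclideanLin (fromBlocks 0 C Cᴴ 0) (sumLift 1 v))) =
      2 * RCLike.re (inner ℂ v (toEuclideanLin ((2 : ℂ)⁻¹ • (C + Cᴴ)) v)) := by
  rw [inner_sumLift_toEuclideanLin_fromBlocks, star_one, one_smul, one_smul, map_smul,
    LinearMap.smul_apply, inner_smul_right]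
  simp

lemma re_inner_sumLift_I_fromBlocks [DecidableEq n] (C : Matrix n n ℂ) (v : EuclideanSpace ℂ n) :
    RCLike.re (inner ℂ (sumLift Complex.I v)
        (toEuclideanLin (fromBlocks 0 C Cᴴ 0) (sumLift Complex.I v))) =
      -2 * RCLike.re (inner ℂ v (toEuclideanLin ((2 * Complex.I)⁻¹ • (C - Cᴴ)) v)) := by
  have hI : Complex.I • C + star Complex.I • Cᴴ = (-2 : ℂ) • ((2 * Complex.I)⁻¹ • (C - Cᴴ)) := by
    rw [smul_smul, show (-2 : ℂ) * (2 * Complex.I)⁻¹ = Complex.I by field_simp; simp]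
    simp [Complex.conj_I, sub_eq_add_neg]
  rw [inner_sumLift_toEuclideanLin_fromBlocks, hI, map_smul, LinearMap.smul_apply,
    inner_smul_right]
  simp

end Matrix

/-- For the selfadjoint block matrix `T̃ = [[0, C],[C*, 0]]`,
`rank±(T̃) ≥ max{rank±(Re C), rank±(Im C)}`. -/
theorem stmt18 {k : ℕ} (C : Matrix (Fin k) (Fin k) ℂ)
    (hT : (Matrix.fromBlocks (0 : Matrix (Fin k) (Fin k) ℂ) C Cᴴ 0).IsHermitian)
    (hRe : ((2 : ℂ)⁻¹ • (C + Cᴴ)).IsHermitian)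
    (hIm : ((((2 : ℂ) * Complex.I)⁻¹) • (C - Cᴴ)).IsHermitian) :
    max (rankPM ((2 : ℂ)⁻¹ • (C + Cᴴ)) hRe)
        (rankPM ((((2 : ℂ) * Complex.I)⁻¹) • (C - Cᴴ)) hIm) ≤
      rankPM (Matrix.fromBlocks (0 : Matrix (Fin k) (Fin k) ℂ) C Cᴴ 0) hT := by
  obtain ⟨posRe, negRe⟩ := hRe.isEigenbasis.card_pos_le_and_card_neg_le hT.isEigenbasis
    (sumLift 1) two_pos (re_inner_sumLift_one_fromBlocks C)
  obtain ⟨negIm, posIm⟩ : #{i | hIm.eigenvalues i < 0} ≤ #{i | 0 < hT.eigenvalues i} ∧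
      #{i | 0 < hIm.eigenvalues i} ≤ #{i | hT.eigenvalues i < 0} := by
    simpa using hIm.isEigenbasis.neg.card_pos_le_and_card_neg_le hT.isEigenbasis
      (sumLift Complex.I) two_pos fun v => by
        rw [re_inner_sumLift_I_fromBlocks, LinearMap.neg_apply, inner_neg_right, map_neg]
        ring
  exact max_le (le_min ((min_le_left _ _).trans posRe) ((min_le_right _ _).trans negRe))
    (le_min ((min_le_right _ _).trans negIm) ((min_le_left _ _).trans posIm))
end
end
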